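/- arXiv:2408.01868 — 2 statements merged into one kernel-verified Lean document; each statement's English description precedes it below -/
import Mathlib

section
/- Let (Ω, 𝓕, P) be a probability space, p ≥ 1, π₀ a probability measure on ℝ^p with finite second moment, Δ_t and Δ_∞ be ℝ^p-valued random vectors, and r_t : ℝ^p × Ω → ℝ be jointly measurable with r_t(u) ≤ ‖Δ_t/2 − u‖² pointwise (so the exponents below are nonpositive). Define the random finite measures on ℝ^p: m_t(du) := exp(−‖Δ_t/2 − u‖² + r_t(u)) π₀(du) and m(du) := exp(−‖Δ_∞/2 − u‖²) π₀(du). Then E‖m_t − m‖_TV ≤ ε_Δ(t) + c · ε_Δ(t)^{1/2} + ε_r(t), where ε_Δ(t) := E‖(Δ_t − Δ_∞)/2‖², ε_r(t) := E ∫_{ℝ^p} |r_t(u)| π₀(du), and c := 2 · E[ ( ∫_{ℝ^p} ‖Δ_∞/2 − u‖ π₀(du) )² ]^{1/2} is a constant depending only on π₀ and the law of Δ_∞. -/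
open MeasureTheory Filter Set

/-- The total variation distance between two (finite) measures: the supremum over measurable
sets of the difference of the measures of the set. -/
noncomputable def tvDist {α : Type*} [MeasurableSpace α] (μ ν : Measure α) : ℝ :=
  ⨆ A : {s : Set α // MeasurableSet s}, |(μ A.1).toReal - (ν A.1).toReal|

/-!
Both densities are exponentials of nonpositive exponents, and `exp` is `1`-Lipschitz on
`(-∞, 0]`, so the densities differ pointwise by at most the difference of their exponents.
Expanding the squared norms bounds that by `δ² + 2 δ ‖Δ_∞/2 - u‖ + |r(u)|`, where
`δ = ‖(Δ_t - Δ_∞)/2‖`. The total variation distance is at most the `L¹` distance of the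
densities, so integrating in `u` and then in `ω`, with Cauchy–Schwarz on the cross term,
gives the bound.
-/

lemma Real.abs_exp_sub_exp_le_of_nonpos {x y : ℝ} (hx : x ≤ 0) (hy : y ≤ 0) :
    |Real.exp x - Real.exp y| ≤ |x - y| := by
  wlog hxy : x ≤ y generalizing x y
  · rw [abs_sub_comm, abs_sub_comm x]
    exact this hy hx (le_of_not_ge hxy)
  have hsplit : Real.exp x = Real.exp y * Real.exp (x - y) := by rw [← Real.exp_add]; ring_nf
  have hlin := Real.add_one_le_exp (x - y)
  have hy1 : Real.exp y ≤ 1 := Real.exp_le_one_iff.mpr hy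
  have hxy1 : Real.exp (x - y) ≤ 1 := Real.exp_le_one_iff.mpr (by linarith)
  rw [abs_sub_comm, abs_of_nonneg (sub_nonneg.2 (Real.exp_le_exp.2 hxy)), abs_sub_comm,
    abs_of_nonneg (sub_nonneg.2 hxy), hsplit]
  nlinarith [Real.exp_pos y]

lemma abs_norm_sq_sub_norm_sq_le {E : Type*} [SeminormedAddCommGroup E] (x y : E) :
    |‖x‖ ^ 2 - ‖y‖ ^ 2| ≤ ‖x - y‖ ^ 2 + 2 * ‖x - y‖ * ‖y‖ := by
  have h := abs_norm_sub_norm_le x y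
  have hy := norm_nonneg y
  calc |‖x‖ ^ 2 - ‖y‖ ^ 2| = |‖x‖ - ‖y‖| * |‖x‖ - ‖y‖ + 2 * ‖y‖| := by
        rw [← abs_mul]; ring_nf
    _ ≤ ‖x - y‖ * (‖x - y‖ + 2 * ‖y‖) := by
        gcongr
        have h2y : |2 * ‖y‖| = 2 * ‖y‖ := abs_of_nonneg (by positivity)
        exact (abs_add_le _ _).trans (by linarith)
    _ = ‖x - y‖ ^ 2 + 2 * ‖x - y‖ * ‖y‖ := by ring

lemma abs_exp_neg_norm_sq_sub_exp_neg_norm_sq_le {E : Type*} [SeminormedAddCommGroup E]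
    {a b u : E} {ρ : ℝ} (hρ : ρ ≤ ‖a - u‖ ^ 2) :
    |Real.exp (-‖a - u‖ ^ 2 + ρ) - Real.exp (-‖b - u‖ ^ 2)| ≤
      ‖a - b‖ ^ 2 + 2 * ‖a - b‖ * ‖b - u‖ + |ρ| := by
  have hexp := Real.abs_exp_sub_exp_le_of_nonpos (x := -‖a - u‖ ^ 2 + ρ)
    (y := -‖b - u‖ ^ 2) (by linarith) (by nlinarith [norm_nonneg (b - u)])
  have hsq := abs_norm_sq_sub_norm_sq_le (a - u) (b - u)
  rw [sub_sub_sub_cancel_right] at hsq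
  have htri : |-‖a - u‖ ^ 2 + ρ - -‖b - u‖ ^ 2| ≤ |‖a - u‖ ^ 2 - ‖b - u‖ ^ 2| + |ρ| := by
    rw [show -‖a - u‖ ^ 2 + ρ - -‖b - u‖ ^ 2 = -(‖a - u‖ ^ 2 - ‖b - u‖ ^ 2) + ρ by ring,
      ← abs_neg (‖a - u‖ ^ 2 - ‖b - u‖ ^ 2)]
    exact abs_add_le _ _
  linarith

lemma tvDist_withDensity_ofReal_le {α : Type*} [MeasurableSpace α] {μ : Measure α}
    {f g : α → ℝ} (hf : Integrable f μ) (hg : Integrable g μ) (hf0 : 0 ≤ᵐ[μ] f)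
    (hg0 : 0 ≤ᵐ[μ] g) :
    tvDist (μ.withDensity fun x => ENNReal.ofReal (f x))
      (μ.withDensity fun x => ENNReal.ofReal (g x)) ≤ ∫ x, |f x - g x| ∂μ := by
  have hmeasure : ∀ {h : α → ℝ}, Integrable h μ → 0 ≤ᵐ[μ] h → ∀ {A : Set α}, MeasurableSet A →
      (μ.withDensity fun x => ENNReal.ofReal (h x)) A = ENNReal.ofReal (∫ x in A, h x ∂μ) :=
    fun hi h0 _ hA => by
      rw [withDensity_apply _ hA,
        ofReal_integral_eq_lintegral_ofReal hi.restrict (ae_restrict_of_ae h0)]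
  refine Real.iSup_le (fun ⟨A, hA⟩ => ?_) (integral_nonneg fun _ => abs_nonneg _)
  rw [hmeasure hf hf0 hA, hmeasure hg hg0 hA,
    ENNReal.toReal_ofReal (setIntegral_nonneg_of_ae_restrict (ae_restrict_of_ae hf0)),
    ENNReal.toReal_ofReal (setIntegral_nonneg_of_ae_restrict (ae_restrict_of_ae hg0)),
    ← integral_sub hf.restrict hg.restrict]
  exact abs_integral_le_integral_abs.trans
    (setIntegral_le_integral (hf.sub hg).abs (ae_of_all _ fun _ => abs_nonneg _))

lemma integrable_id_of_lintegral_nnnorm_sq_lt_top {E : Type*} [NormedAddCommGroup E]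
    [MeasurableSpace E] [OpensMeasurableSpace E] [SecondCountableTopology E] {μ : Measure E}
    [IsFiniteMeasure μ] (hmom : ∫⁻ u, (‖u‖₊ : ENNReal) ^ 2 ∂μ < ⊤) : Integrable id μ := by
  have hsq : Integrable (fun u : E => ‖u‖ ^ 2) μ :=
    ⟨by fun_prop, by simpa [HasFiniteIntegral, enorm_pow, enorm_eq_nnnorm] using hmom⟩
  exact ((memLp_two_iff_integrable_sq_norm aestronglyMeasurable_id).2 hsq).integrable one_le_two

lemma ofReal_tvDist_withDensity_exp_le {E : Type*} [NormedAddCommGroup E] [MeasurableSpace E]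
    [OpensMeasurableSpace E] {μ : Measure E} [IsProbabilityMeasure μ] (hμ : Integrable id μ)
    (a b : E) {ρ : E → ℝ} (hρ : Measurable ρ) (hρle : ∀ u, ρ u ≤ ‖a - u‖ ^ 2) :
    ENNReal.ofReal (tvDist
        (μ.withDensity fun u => ENNReal.ofReal (Real.exp (-‖a - u‖ ^ 2 + ρ u)))
        (μ.withDensity fun u => ENNReal.ofReal (Real.exp (-‖b - u‖ ^ 2)))) ≤
      ENNReal.ofReal (‖a - b‖ ^ 2)
        + 2 * (ENNReal.ofReal (∫ u, ‖b - u‖ ∂μ) * ENNReal.ofReal ‖a - b‖)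
        + ∫⁻ u, ENNReal.ofReal |ρ u| ∂μ := by
  set f : E → ℝ := fun u => Real.exp (-‖a - u‖ ^ 2 + ρ u)
  set g : E → ℝ := fun u => Real.exp (-‖b - u‖ ^ 2)
  have hdist : Measurable fun u : E => ‖b - u‖ :=
    (continuous_const.sub continuous_id).norm.measurable
  have hf : Integrable f μ := by
    refine .of_bound (C := 1) ?_ (ae_of_all _ fun u => ?_)
    · exact (((continuous_const.sub continuous_id).norm.measurable.pow_const 2).neg.add
        hρ).exp.aestronglyMeasurable
    · rw [Real.norm_of_nonneg (Real.exp_pos _).le, Real.exp_le_one_iff]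
      linarith [hρle u]
  have hg : Integrable g μ := by
    refine .of_bound (C := 1) (hdist.pow_const 2).neg.exp.aestronglyMeasurable
      (ae_of_all _ fun u => ?_)
    rw [Real.norm_of_nonneg (Real.exp_pos _).le, Real.exp_le_one_iff, neg_nonpos]
    positivity
  have hdist_int : Integrable (fun u => ‖b - u‖) μ := ((integrable_const b).sub hμ).norm
  calc ENNReal.ofReal (tvDist _ _)
      ≤ ENNReal.ofReal (∫ u, |f u - g u| ∂μ) := ENNReal.ofReal_le_ofReal
        (tvDist_withDensity_ofReal_le hf hg (ae_of_all _ fun _ => (Real.exp_pos _).le)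
          (ae_of_all _ fun _ => (Real.exp_pos _).le))
    _ = ∫⁻ u, ENNReal.ofReal |f u - g u| ∂μ :=
        ofReal_integral_eq_lintegral_ofReal (hf.sub hg).abs (ae_of_all _ fun _ => abs_nonneg _)
    _ ≤ ∫⁻ u, (ENNReal.ofReal (‖a - b‖ ^ 2)
          + 2 * ENNReal.ofReal ‖a - b‖ * ENNReal.ofReal ‖b - u‖ + ENNReal.ofReal |ρ u|) ∂μ := by
        refine lintegral_mono fun u => ?_
        rw [← ENNReal.ofReal_ofNat 2, ← ENNReal.ofReal_mul zero_le_two,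
          ← ENNReal.ofReal_mul (by positivity),
          ← ENNReal.ofReal_add (by positivity) (by positivity),
          ← ENNReal.ofReal_add (by positivity) (abs_nonneg _)]
        exact ENNReal.ofReal_le_ofReal (abs_exp_neg_norm_sq_sub_exp_neg_norm_sq_le (hρle u))
    _ = _ := by
        rw [lintegral_add_left (by fun_prop), lintegral_add_left measurable_const,
          lintegral_const, measure_univ, mul_one,
          lintegral_const_mul _ hdist.ennreal_ofReal,
          ← ofReal_integral_eq_lintegral_ofReal hdist_int (ae_of_all _ fun _ => norm_nonneg _)]
        ring

lemma ENNReal.ofReal_sq_le (x : ℝ) : ENNReal.ofReal x ^ 2 ≤ ENNReal.ofReal (x ^ 2) := by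
  rcases le_total 0 x with hx | hx
  · rw [ENNReal.ofReal_pow hx]
  · simp [ENNReal.ofReal_of_nonpos hx]

lemma lintegral_ofReal_mul_le_sqrt_mul_sqrt {Ω : Type*} [MeasurableSpace Ω] {P : Measure Ω}
    {f g : Ω → ℝ} (hf : AEMeasurable f P) (hg : AEMeasurable g P) :
    ∫⁻ ω, ENNReal.ofReal (f ω) * ENNReal.ofReal (g ω) ∂P ≤
      (∫⁻ ω, ENNReal.ofReal (f ω ^ 2) ∂P) ^ (1 / 2 : ℝ)
        * (∫⁻ ω, ENNReal.ofReal (g ω ^ 2) ∂P) ^ (1 / 2 : ℝ) := by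
  have hsq : ∀ h : Ω → ℝ, (∫⁻ ω, ENNReal.ofReal (h ω) ^ (2 : ℝ) ∂P) ^ (1 / 2 : ℝ) ≤
      (∫⁻ ω, ENNReal.ofReal (h ω ^ 2) ∂P) ^ (1 / 2 : ℝ) := fun h => by
    gcongr with ω
    rw [ENNReal.rpow_two]
    exact ENNReal.ofReal_sq_le _
  calc ∫⁻ ω, ENNReal.ofReal (f ω) * ENNReal.ofReal (g ω) ∂P
      ≤ (∫⁻ ω, ENNReal.ofReal (f ω) ^ (2 : ℝ) ∂P) ^ (1 / 2 : ℝ)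
        * (∫⁻ ω, ENNReal.ofReal (g ω) ^ (2 : ℝ) ∂P) ^ (1 / 2 : ℝ) :=
        ENNReal.lintegral_mul_le_Lp_mul_Lq P .two_two hf.ennreal_ofReal hg.ennreal_ofReal
    _ ≤ _ := mul_le_mul' (hsq f) (hsq g)

lemma lintegral_le_of_le_sq_add_two_mul_add {Ω : Type*} [MeasurableSpace Ω] {P : Measure Ω}
    {T R : Ω → ENNReal} {d G : Ω → ℝ} (hd : AEMeasurable d P) (hG : AEMeasurable G P)
    (hT : ∀ ω, T ω ≤ ENNReal.ofReal (d ω ^ 2)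
      + 2 * (ENNReal.ofReal (G ω) * ENNReal.ofReal (d ω)) + R ω) :
    ∫⁻ ω, T ω ∂P ≤ (∫⁻ ω, ENNReal.ofReal (d ω ^ 2) ∂P)
      + (2 * (∫⁻ ω, ENNReal.ofReal (G ω ^ 2) ∂P) ^ (1 / 2 : ℝ))
        * (∫⁻ ω, ENNReal.ofReal (d ω ^ 2) ∂P) ^ (1 / 2 : ℝ)
      + ∫⁻ ω, R ω ∂P := by
  have hd2 : AEMeasurable (fun ω => ENNReal.ofReal (d ω ^ 2)) P := (hd.pow_const 2).ennreal_ofReal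
  calc ∫⁻ ω, T ω ∂P
      ≤ (∫⁻ ω, ENNReal.ofReal (d ω ^ 2) ∂P)
        + 2 * ∫⁻ ω, ENNReal.ofReal (G ω) * ENNReal.ofReal (d ω) ∂P + ∫⁻ ω, R ω ∂P := by
        rw [← lintegral_const_mul' _ _ ENNReal.ofNat_ne_top, ← lintegral_add_left' hd2,
          ← lintegral_add_left' (by fun_prop)]
        exact lintegral_mono hT
    _ ≤ _ := by
        grw [lintegral_ofReal_mul_le_sqrt_mul_sqrt hG hd, mul_assoc]

/-- On a probability space `(Ω, 𝓕, P)`, let `π₀` be a probability measure on `ℝ^p` with finite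
second moment, let `Δ_t, Δ_∞ : Ω → ℝ^p` be random vectors, and let `r_t : ℝ^p × Ω → ℝ` be
jointly measurable with `r_t(u) ≤ ‖Δ_t/2 − u‖²` pointwise. Define the random measures
`m_t(du) := exp(−‖Δ_t/2 − u‖² + r_t(u)) π₀(du)` and `m(du) := exp(−‖Δ_∞/2 − u‖²) π₀(du)`.
Then `E ‖m_t − m‖_TV ≤ ε_Δ + c ε_Δ^{1/2} + ε_r`, where
`ε_Δ := E ‖(Δ_t − Δ_∞)/2‖²`, `ε_r := E ∫ |r_t(u)| π₀(du)` and
`c := 2 E[(∫ ‖Δ_∞/2 − u‖ π₀(du))²]^{1/2}`. -/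
theorem expected_tv_distance_bound
    {p : ℕ} {Ω : Type*} [MeasurableSpace Ω]
    (P : Measure Ω) [IsProbabilityMeasure P]
    (π₀ : Measure (EuclideanSpace ℝ (Fin p))) [IsProbabilityMeasure π₀]
    (hmom : ∫⁻ u, (‖u‖₊ : ENNReal) ^ 2 ∂π₀ < ⊤)
    (Δt Δinf : Ω → EuclideanSpace ℝ (Fin p))
    (hΔt : Measurable Δt) (hΔinf : Measurable Δinf)
    (r : EuclideanSpace ℝ (Fin p) → Ω → ℝ)
    (hr : Measurable (Function.uncurry r))
    (hrle : ∀ u ω, r u ω ≤ ‖(1/2 : ℝ) • Δt ω - u‖ ^ 2)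
    (mt m : Ω → Measure (EuclideanSpace ℝ (Fin p)))
    (hmt : ∀ ω, mt ω = π₀.withDensity
      (fun u => ENNReal.ofReal (Real.exp (-‖(1/2 : ℝ) • Δt ω - u‖ ^ 2 + r u ω))))
    (hm : ∀ ω, m ω = π₀.withDensity
      (fun u => ENNReal.ofReal (Real.exp (-‖(1/2 : ℝ) • Δinf ω - u‖ ^ 2)))) :
    ∫⁻ ω, ENNReal.ofReal (tvDist (mt ω) (m ω)) ∂P ≤
      (∫⁻ ω, ENNReal.ofReal (‖(1/2 : ℝ) • (Δt ω - Δinf ω)‖ ^ 2) ∂P)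
      + (2 * (∫⁻ ω, ENNReal.ofReal ((∫ u, ‖(1/2 : ℝ) • Δinf ω - u‖ ∂π₀) ^ 2) ∂P) ^ (1/2 : ℝ))
        * (∫⁻ ω, ENNReal.ofReal (‖(1/2 : ℝ) • (Δt ω - Δinf ω)‖ ^ 2) ∂P) ^ (1/2 : ℝ)
      + ∫⁻ ω, (∫⁻ u, ENNReal.ofReal |r u ω| ∂π₀) ∂P := by
  have hπ₀ : Integrable id π₀ := integrable_id_of_lintegral_nnnorm_sq_lt_top hmom
  have hG : Measurable fun ω => ∫ u, ‖(1/2 : ℝ) • Δinf ω - u‖ ∂π₀ := by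
    have h : StronglyMeasurable fun q : Ω × EuclideanSpace ℝ (Fin p) =>
        ‖(1/2 : ℝ) • Δinf q.1 - q.2‖ :=
      (((hΔinf.comp measurable_fst).const_smul (1/2 : ℝ)).sub
        measurable_snd).norm.stronglyMeasurable
    exact h.integral_prod_right'.measurable
  have hd : Measurable fun ω => ‖(1/2 : ℝ) • (Δt ω - Δinf ω)‖ :=
    ((hΔt.sub hΔinf).const_smul (1/2 : ℝ)).norm
  refine lintegral_le_of_le_sq_add_two_mul_add hd.aemeasurable hG.aemeasurable fun ω => ?_
  rw [hmt ω, hm ω, smul_sub]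
  exact ofReal_tvDist_withDensity_exp_le hπ₀ _ _ (hr.comp (measurable_id.prodMk measurable_const))
    (hrle · ω)
end

section
/- Let (X_s)_{s≥0} be a jointly measurable E-valued stochastic process on a probability space (Ω, 𝓕, P), let μ be a probability measure on E, and suppose there are constants k, γ > 0 with ‖ law(X_s) − μ ‖_TV ≤ k e^{−γ s} for all s ≥ 0. Let g : E → ℝ be a bounded measurable function with ∫_E g dμ = 0. Then for every t > 0, | E[ (1/t) ∫_0^t g(X_s) ds ] | ≤ 2 ‖g‖_∞ k (1 − e^{−γ t}) / (γ t); in particular the left-hand side is at most 2‖g‖_∞ k / (γ t). -/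
open MeasureTheory Filter

/-!
Since `∫ g dμ = 0`, the dual bound for the total variation distance gives
`|E g(X_s)| ≤ 2 ‖g‖_∞ ‖law(X_s) − μ‖_TV ≤ 2 ‖g‖_∞ k e^{−γ s}` for each `s ≥ 0`. Exchanging the
expectation with the time integral (Fubini) and integrating `e^{−γ s}` over `[0, t]` yields the
bound `2 ‖g‖_∞ k (1 − e^{−γ t}) / (γ t)`.
-/

open Set

section TotalVariation

variable {α : Type*} [MeasurableSpace α]

lemma abs_measureReal_sub_le_tvDist (μ ν : Measure α) [IsFiniteMeasure μ] [IsFiniteMeasure ν]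
    {A : Set α} (hA : MeasurableSet A) : |μ.real A - ν.real A| ≤ tvDist μ ν := by
  refine le_ciSup (f := fun B : {s : Set α // MeasurableSet s} => |μ.real B.1 - ν.real B.1|)
    ⟨μ.real univ + ν.real univ, ?_⟩ ⟨A, hA⟩
  rintro _ ⟨B, rfl⟩
  have hμ := measureReal_mono (μ := μ) (subset_univ B.1)
  have hν := measureReal_mono (μ := ν) (subset_univ B.1)
  have := measureReal_nonneg (μ := μ) (s := B.1)
  have := measureReal_nonneg (μ := ν) (s := B.1)
  exact abs_sub_le_iff.2 ⟨by linarith, by linarith⟩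

lemma abs_integral_sub_le_of_le {μ ν : Measure α} [IsFiniteMeasure μ] (hνμ : ν ≤ μ)
    {g : α → ℝ} (hg : Measurable g) {C : ℝ} (hgC : ∀ x, |g x| ≤ C) :
    |∫ x, g x ∂μ - ∫ x, g x ∂ν| ≤ C * (μ.real univ - ν.real univ) := by
  have : IsFiniteMeasure ν := isFiniteMeasure_of_le μ hνμ
  obtain ⟨ρ, _, rfl⟩ : ∃ ρ : Measure α, IsFiniteMeasure ρ ∧ μ = ρ + ν :=
    ⟨μ - ν, inferInstance, (Measure.sub_add_cancel_of_le hνμ).symm⟩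
  rw [integral_add_measure (.of_bound hg.aestronglyMeasurable C (.of_forall hgC))
    (.of_bound hg.aestronglyMeasurable C (.of_forall hgC)), measureReal_add_apply,
    add_sub_cancel_right, add_sub_cancel_right]
  exact norm_integral_le_of_norm_le_const (f := g) (.of_forall hgC)

lemma restrict_le_restrict_of_forall_subset_le {μ ν : Measure α} {A : Set α}
    (hA : MeasurableSet A) (h : ∀ t, MeasurableSet t → t ⊆ A → ν t ≤ μ t) :
    ν.restrict A ≤ μ.restrict A :=
  Measure.le_iff.2 fun s hs => by
    simpa only [Measure.restrict_apply hs] using h _ (hs.inter hA) inter_subset_right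

lemma abs_integral_sub_le_two_mul_tvDist (μ ν : Measure α) [IsFiniteMeasure μ]
    [IsFiniteMeasure ν] {g : α → ℝ} (hg : Measurable g) {C : ℝ} (hgC : ∀ x, |g x| ≤ C) :
    |∫ x, g x ∂μ - ∫ x, g x ∂ν| ≤ 2 * C * tvDist μ ν := by
  rcases isEmpty_or_nonempty α with hα | ⟨⟨x₀⟩⟩
  · simp [Measure.eq_zero_of_isEmpty μ, Measure.eq_zero_of_isEmpty ν, tvDist]
  have hC : 0 ≤ C := (abs_nonneg _).trans (hgC x₀)
  -- On the Hahn set `A` of `μ - ν` the restrictions satisfy `ν ≤ μ`, and on `Aᶜ` they satisfy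
  -- `μ ≤ ν`, so each half of the integral is a difference of comparable measures.
  obtain ⟨A, hA, hνμ, hμν⟩ := hahn_decomposition μ ν
  have hpos := abs_integral_sub_le_of_le (restrict_le_restrict_of_forall_subset_le hA hνμ) hg hgC
  have hneg := abs_integral_sub_le_of_le
    (restrict_le_restrict_of_forall_subset_le hA.compl hμν) hg hgC
  simp only [measureReal_restrict_apply_univ] at hpos hneg
  have hint : ∀ ρ : Measure α, [IsFiniteMeasure ρ] → Integrable g ρ :=
    fun _ _ => .of_bound hg.aestronglyMeasurable C (.of_forall hgC)
  have htvA := abs_measureReal_sub_le_tvDist μ ν hA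
  have htvAc := abs_measureReal_sub_le_tvDist μ ν hA.compl
  rw [← integral_add_compl hA (hint μ), ← integral_add_compl hA (hint ν)]
  calc |(∫ x in A, g x ∂μ + ∫ x in Aᶜ, g x ∂μ) - (∫ x in A, g x ∂ν + ∫ x in Aᶜ, g x ∂ν)|
      = |(∫ x in A, g x ∂μ - ∫ x in A, g x ∂ν) - (∫ x in Aᶜ, g x ∂ν - ∫ x in Aᶜ, g x ∂μ)| := by
        congr 1; ring
    _ ≤ |∫ x in A, g x ∂μ - ∫ x in A, g x ∂ν| + |∫ x in Aᶜ, g x ∂ν - ∫ x in Aᶜ, g x ∂μ| :=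
        abs_sub _ _
    _ ≤ C * |μ.real A - ν.real A| + C * |μ.real Aᶜ - ν.real Aᶜ| := by
        gcongr
        · exact hpos.trans (mul_le_mul_of_nonneg_left (le_abs_self _) hC)
        · exact hneg.trans (mul_le_mul_of_nonneg_left
            ((le_abs_self _).trans_eq (abs_sub_comm _ _)) hC)
    _ ≤ 2 * C * tvDist μ ν := by
        linarith [mul_le_mul_of_nonneg_left htvA hC, mul_le_mul_of_nonneg_left htvAc hC]

lemma abs_integral_comp_le_two_mul_tvDist {Ω : Type*} [MeasurableSpace Ω]
    (P : Measure Ω) [IsFiniteMeasure P] {Y : Ω → α} (hY : Measurable Y)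
    (μ : Measure α) [IsFiniteMeasure μ] {g : α → ℝ} (hg : Measurable g) {C : ℝ}
    (hgC : ∀ x, |g x| ≤ C) (hgmean : ∫ x, g x ∂μ = 0) :
    |∫ ω, g (Y ω) ∂P| ≤ 2 * C * tvDist (P.map Y) μ := by
  rw [← integral_map hY.aemeasurable hg.aestronglyMeasurable, ← sub_zero (∫ x, g x ∂_), ← hgmean]
  exact abs_integral_sub_le_two_mul_tvDist _ _ hg hgC

end TotalVariation

lemma integral_intervalIntegral_swap_of_abs_le {Ω : Type*} [MeasurableSpace Ω]
    (P : Measure Ω) [IsFiniteMeasure P] {F : ℝ → Ω → ℝ} (hF : Measurable (Function.uncurry F))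
    {C : ℝ} (hFC : ∀ s ω, |F s ω| ≤ C) (a b : ℝ) :
    ∫ ω, (∫ s in a..b, F s ω) ∂P = ∫ s in a..b, ∫ ω, F s ω ∂P := by
  have : IsFiniteMeasure (volume.restrict (uIoc a b)) :=
    inferInstanceAs (IsFiniteMeasure (volume.restrict (Ioc _ _)))
  exact (intervalIntegral_integral_swap
    (.of_bound hF.aestronglyMeasurable C (.of_forall fun p => hFC p.1 p.2))).symm

lemma integral_exp_neg_mul_of_ne_zero {γ : ℝ} (hγ : γ ≠ 0) (t : ℝ) :
    ∫ s in (0 : ℝ)..t, Real.exp (-γ * s) = (1 - Real.exp (-γ * t)) / γ := by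
  rw [intervalIntegral.integral_comp_mul_left Real.exp (neg_ne_zero.2 hγ), integral_exp,
    mul_zero, Real.exp_zero, smul_eq_mul]
  field_simp
  ring

lemma abs_intervalIntegral_le_of_abs_le_mul_exp {f : ℝ → ℝ} {M γ t : ℝ} (hγ : γ ≠ 0)
    (ht : 0 ≤ t) (hf : ∀ s ∈ Ioc 0 t, |f s| ≤ M * Real.exp (-γ * s)) :
    |∫ s in (0 : ℝ)..t, f s| ≤ M * (1 - Real.exp (-γ * t)) / γ := by
  calc |∫ s in (0 : ℝ)..t, f s| ≤ ∫ s in (0 : ℝ)..t, M * Real.exp (-γ * s) :=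
        intervalIntegral.norm_integral_le_of_norm_le (f := f) ht (.of_forall hf)
          ((by fun_prop : Continuous fun s => M * Real.exp (-γ * s)).intervalIntegrable _ _)
    _ = M * (1 - Real.exp (-γ * t)) / γ := by
        rw [intervalIntegral.integral_const_mul, integral_exp_neg_mul_of_ne_zero hγ, mul_div_assoc]

/-- Let `(X_s)_{s ≥ 0}` be a jointly measurable `S`-valued process on a probability space
`(Ω, 𝓕, P)`, let `μ` be a probability measure on `S`, and suppose that for constants
`k, γ > 0` one has `‖law(X_s) − μ‖_TV ≤ k e^{−γ s}` for all `s ≥ 0`. Let `g : S → ℝ` be a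
bounded measurable function (with bound `C`) satisfying `∫ g dμ = 0`. Then for every `t > 0`,
`|E[(1/t) ∫₀ᵗ g(X_s) ds]| ≤ 2 C k (1 − e^{−γ t})/(γ t)`, and in particular the left-hand
side is at most `2 C k/(γ t)`. -/
theorem time_average_bound_of_uniform_ergodicity
    {Ω S : Type*} [MeasurableSpace Ω] [MeasurableSpace S]
    (P : Measure Ω) [IsProbabilityMeasure P]
    (X : ℝ → Ω → S) (hX : Measurable (Function.uncurry X))
    (μ : Measure S) [IsProbabilityMeasure μ]
    (k γ : ℝ) (hk : 0 < k) (hγ : 0 < γ)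
    (htv : ∀ s : ℝ, 0 ≤ s → tvDist (P.map (X s)) μ ≤ k * Real.exp (-γ * s))
    (g : S → ℝ) (hg : Measurable g)
    (C : ℝ) (hgC : ∀ x, |g x| ≤ C)
    (hgmean : ∫ x, g x ∂μ = 0) :
    ∀ t : ℝ, 0 < t →
      |∫ ω, (1 / t) * (∫ s in (0:ℝ)..t, g (X s ω)) ∂P| ≤
          2 * C * k * (1 - Real.exp (-γ * t)) / (γ * t) ∧
        |∫ ω, (1 / t) * (∫ s in (0:ℝ)..t, g (X s ω)) ∂P| ≤ 2 * C * k / (γ * t) := by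
  intro t ht
  have hC : 0 ≤ C := (abs_nonneg _).trans (hgC (nonempty_of_isProbabilityMeasure μ).some)
  have hlaw : ∀ s ∈ Ioc 0 t, |∫ ω, g (X s ω) ∂P| ≤ 2 * C * k * Real.exp (-γ * s) := by
    intro s hs
    rw [mul_assoc _ k]
    exact (abs_integral_comp_le_two_mul_tvDist P (hX.comp measurable_prodMk_left) μ hg hgC
      hgmean).trans (by gcongr; exact htv s hs.1.le)
  have hswap := integral_intervalIntegral_swap_of_abs_le P (F := fun s ω => g (X s ω))
    (hg.comp hX) (fun s ω => hgC (X s ω)) 0 t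
  have hmean := abs_intervalIntegral_le_of_abs_le_mul_exp hγ.ne' ht.le hlaw
  have hfirst : |∫ ω, (1 / t) * (∫ s in (0:ℝ)..t, g (X s ω)) ∂P| ≤
      2 * C * k * (1 - Real.exp (-γ * t)) / (γ * t) := by
    rw [integral_const_mul, hswap, abs_mul, abs_of_pos (one_div_pos.2 ht), ← div_div,
      one_div_mul_eq_div]
    exact div_le_div_of_nonneg_right hmean ht.le
  refine ⟨hfirst, hfirst.trans (div_le_div_of_nonneg_right ?_ (by positivity))⟩
  exact mul_le_of_le_one_right (by positivity) (sub_le_self _ (Real.exp_pos _).le)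
end
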